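/- Let ι be a finite nonempty index type and let x, y : ι → ℝ be strictly positive vectors. Then for every real p, the entrywise powers satisfy d_H(x^p, y^p) = |p| · d_H(x, y), where (x^p)_i = x_i^p. -/

import Mathlib

open Finset Real

/-- Hilbert projective metric on strictly positive vectors:
`d_H(x,y) = log (max_i x i / y i) - log (min_i x i / y i)`. -/
noncomputable def dH {ι : Type*} [Fintype ι] [Nonempty ι] (x y : ι → ℝ) : ℝ :=
  Real.log (⨆ i, x i / y i) - Real.log (⨅ i, x i / y i)

/-!
`d_H(x, y)` is the oscillation `max - min` of the log-ratio `i ↦ log (x i / y i)`. Raising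
`x` and `y` to the power `p` multiplies the log-ratio by `p`, and multiplying a function by `p`
multiplies its oscillation by `|p|` (for `p < 0` the maximum and minimum trade places).
-/

section

variable {ι : Type*} [Finite ι] [Nonempty ι] {f : ι → ℝ}

theorem Real.log_ciSup_of_pos (hf : ∀ i, 0 < f i) : log (⨆ i, f i) = ⨆ i, log (f i) := by
  obtain ⟨a, ha⟩ := exists_eq_ciSup_of_finite (f := f)
  rw [← ha]
  exact le_antisymm (le_ciSup (f := fun i => log (f i)) (Set.finite_range _).bddAbove a)
    (ciSup_le fun i => log_le_log (hf i) (ha ▸ le_ciSup (Set.finite_range f).bddAbove i))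

theorem Real.log_ciInf_of_pos (hf : ∀ i, 0 < f i) : log (⨅ i, f i) = ⨅ i, log (f i) := by
  obtain ⟨a, ha⟩ := exists_eq_ciInf_of_finite (f := f)
  rw [← ha]
  exact le_antisymm
    (le_ciInf fun i => log_le_log (hf a) (ha ▸ ciInf_le (Set.finite_range f).bddBelow i))
    (ciInf_le (f := fun i => log (f i)) (Set.finite_range _).bddBelow a)

end

theorem Real.iSup_sub_iInf_const_mul {ι : Sort*} (c : ℝ) (g : ι → ℝ) :
    (⨆ i, c * g i) - (⨅ i, c * g i) = |c| * ((⨆ i, g i) - ⨅ i, g i) := by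
  rcases le_total 0 c with hc | hc
  · rw [← Real.mul_iSup_of_nonneg hc, ← Real.mul_iInf_of_nonneg hc, abs_of_nonneg hc]
    ring
  · rw [← Real.mul_iInf_of_nonpos hc, ← Real.mul_iSup_of_nonpos hc, abs_of_nonpos hc]
    ring

theorem dH_eq_iSup_sub_iInf_log {ι : Type*} [Fintype ι] [Nonempty ι] {x y : ι → ℝ}
    (hxy : ∀ i, 0 < x i / y i) :
    dH x y = (⨆ i, log (x i / y i)) - ⨅ i, log (x i / y i) := by
  rw [dH, log_ciSup_of_pos hxy, log_ciInf_of_pos hxy]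

/-- the Hilbert projective metric scales under entrywise real powers:
for strictly positive vectors `x, y` and every real `p`,
`d_H(x^p, y^p) = |p| * d_H(x, y)`, where `(x^p) i = x i ^ p`. -/
theorem dH_rpow {ι : Type*} [Fintype ι] [Nonempty ι]
    (x y : ι → ℝ) (hx : ∀ i, 0 < x i) (hy : ∀ i, 0 < y i) (p : ℝ) :
    dH (fun i => x i ^ p) (fun i => y i ^ p) = |p| * dH x y := by
  have hratio : ∀ i, 0 < x i / y i := fun i => div_pos (hx i) (hy i)
  have hlog_rpow : ∀ i, log (x i ^ p / y i ^ p) = p * log (x i / y i) := fun i => by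
    rw [← div_rpow (hx i).le (hy i).le, log_rpow (hratio i)]
  rw [dH_eq_iSup_sub_iInf_log hratio,
    dH_eq_iSup_sub_iInf_log fun i => div_pos (rpow_pos_of_pos (hx i) p) (rpow_pos_of_pos (hy i) p)]
  simp only [hlog_rpow]
  exact iSup_sub_iInf_const_mul p _
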